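/- arXiv:2411.14260 — 2 statements merged into one kernel-verified Lean document; each statement's English description precedes it below -/
import Mathlib

section
/- Let d ≥ 1, p ∈ (1,∞), s ∈ (0,1), and let Ω ⊂ ℝ^d be open and bounded. Let U, V ∈ W^{s,p}_0(Ω) and let γ : ℝ → ℝ be nondecreasing and Lipschitz with γ(0) = 0 (so that γ∘(U−V) ∈ W^{s,p}_0(Ω)). Then E(U, γ∘(U−V)) − E(V, γ∘(U−V)) ≥ 0. -/
/-!
Pointwise, the integrand of `E(U, φ) - E(V, φ)` with `φ = γ ∘ (U - V)` is
`(⟦U(x)-U(y)⟧^{p-1} - ⟦V(x)-V(y)⟧^{p-1}) (γ(w(x)) - γ(w(y))) / |x-y|^{d+sp}` with `w = U - V`.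
Since `(U(x)-U(y)) - (V(x)-V(y)) = w(x) - w(y)`, both factors have the sign of `w(x) - w(y)`
(the signed power and `γ` are nondecreasing), so the integrand is nonnegative. The Lipschitz
bound on `γ` and Young's inequality `a^{p-1} b ≤ a^p + b^p` dominate each pairing integrand
by the Gagliardo integrands of `U` and `V`, which justifies splitting the integral.
-/

open MeasureTheory ENNReal

/-- Signed power: `spow r x = |x|^(r-1) * x`. -/
noncomputable def spow (r x : ℝ) : ℝ := |x| ^ (r - 1) * x

/-- Fractional p-Laplacian pairing
`E(u,φ) = ∫∫ ⟦u(x)−u(y)⟧^{p−1}(φ(x)−φ(y)) |x−y|^{−(d+sp)} dx dy`. -/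
noncomputable def fracPairing (d : ℕ) (s p : ℝ)
    (u φ : EuclideanSpace ℝ (Fin d) → ℝ) : ℝ :=
  ∫ z : EuclideanSpace ℝ (Fin d) × EuclideanSpace ℝ (Fin d),
    spow (p - 1) (u z.1 - u z.2) * (φ z.1 - φ z.2) / ‖z.1 - z.2‖ ^ ((d : ℝ) + s * p)

/-- Gagliardo seminorm to the `p`-th power, as an extended nonnegative real. -/
noncomputable def gagliardo (d : ℕ) (s p : ℝ)
    (u : EuclideanSpace ℝ (Fin d) → ℝ) : ℝ≥0∞ :=
  ∫⁻ z : EuclideanSpace ℝ (Fin d) × EuclideanSpace ℝ (Fin d),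
    ENNReal.ofReal (|u z.1 - u z.2| ^ p / ‖z.1 - z.2‖ ^ ((d : ℝ) + s * p))

/-- Membership in `W^{s,p}_0(Ω)`. -/
def memW0 (d : ℕ) (s p : ℝ) (Ω : Set (EuclideanSpace ℝ (Fin d)))
    (u : EuclideanSpace ℝ (Fin d) → ℝ) : Prop :=
  Measurable u ∧ MemLp u (ENNReal.ofReal p) volume ∧
    gagliardo d s p u < ⊤ ∧ ∀ᵐ x, x ∉ Ω → u x = 0

lemma rpow_sub_one_mul_self {r a : ℝ} (hr : 0 < r) (ha : 0 ≤ a) :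
    a ^ (r - 1) * a = a ^ r := by
  rcases ha.eq_or_lt with rfl | ha
  · simp [Real.zero_rpow hr.ne']
  · rw [← Real.rpow_add_one ha.ne', sub_add_cancel]

lemma spow_of_nonneg {r x : ℝ} (hr : 0 < r) (hx : 0 ≤ x) : spow r x = x ^ r := by
  rw [spow, abs_of_nonneg hx, rpow_sub_one_mul_self hr hx]

lemma spow_neg (r x : ℝ) : spow r (-x) = -spow r x := by
  simp [spow, abs_neg]

lemma abs_spow {r : ℝ} (hr : 0 < r) (x : ℝ) : |spow r x| = |x| ^ r := by
  rw [spow, abs_mul, abs_of_nonneg (Real.rpow_nonneg (abs_nonneg x) _),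
    rpow_sub_one_mul_self hr (abs_nonneg x)]

lemma monotoneOn_spow {r : ℝ} (hr : 0 < r) : MonotoneOn (spow r) (Set.Ici 0) := by
  intro x hx y hy hxy
  rw [spow_of_nonneg hr hx, spow_of_nonneg hr hy]
  exact Real.rpow_le_rpow hx hxy hr.le

lemma monotone_spow {r : ℝ} (hr : 0 < r) : Monotone (spow r) := by
  have hodd : ∀ x, spow r x = -spow r (-x) := fun x => by rw [spow_neg, neg_neg]
  exact MonotoneOn.Iic_union_Ici (fun x hx y hy hxy => by
    rw [hodd x, hodd y, neg_le_neg_iff]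
    exact monotoneOn_spow hr (Set.mem_Ici.2 (neg_nonneg.2 hy)) (Set.mem_Ici.2 (neg_nonneg.2 hx))
      (neg_le_neg hxy))
    (monotoneOn_spow hr)

lemma rpow_sub_one_mul_le_add_rpow {p a b : ℝ} (hp : 1 < p) (ha : 0 ≤ a) (hb : 0 ≤ b) :
    a ^ (p - 1) * b ≤ a ^ p + b ^ p := by
  have hp' : 0 < p := by linarith
  rcases le_total b a with h | h
  · calc a ^ (p - 1) * b ≤ a ^ (p - 1) * a := by gcongr
      _ = a ^ p := rpow_sub_one_mul_self hp' ha
      _ ≤ a ^ p + b ^ p := le_add_of_nonneg_right (Real.rpow_nonneg hb p)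
  · calc a ^ (p - 1) * b ≤ b ^ (p - 1) * b := by gcongr
      _ = b ^ p := rpow_sub_one_mul_self hp' hb
      _ ≤ a ^ p + b ^ p := le_add_of_nonneg_left (Real.rpow_nonneg ha p)

lemma abs_spow_mul_le {p K a b t : ℝ} (hp : 1 < p) (hK : 0 ≤ K)
    (ht : |t| ≤ K * (|a| + |b|)) :
    |spow (p - 1) a * t| ≤ K * (2 * |a| ^ p + 2 * |b| ^ p) := by
  have hAp := Real.rpow_nonneg (abs_nonneg a) p
  have hBp := Real.rpow_nonneg (abs_nonneg b) p
  have hyoung := rpow_sub_one_mul_le_add_rpow hp (abs_nonneg a) (abs_nonneg b)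
  have hself := rpow_sub_one_mul_self (r := p) (by linarith) (abs_nonneg a)
  rw [abs_mul, abs_spow (by linarith)]
  calc |a| ^ (p - 1) * |t| ≤ |a| ^ (p - 1) * (K * (|a| + |b|)) := by gcongr
    _ = K * (|a| ^ (p - 1) * |a| + |a| ^ (p - 1) * |b|) := by ring
    _ ≤ K * (2 * |a| ^ p + 2 * |b| ^ p) := mul_le_mul_of_nonneg_left (by linarith) hK

lemma LipschitzWith.abs_sub_comp_sub_le {γ : ℝ → ℝ} {K : NNReal} (hγ : LipschitzWith K γ)
    (u₁ u₂ v₁ v₂ : ℝ) :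
    |γ (u₁ - v₁) - γ (u₂ - v₂)| ≤ K * (|u₁ - u₂| + |v₁ - v₂|) := by
  calc |γ (u₁ - v₁) - γ (u₂ - v₂)| ≤ K * |(u₁ - v₁) - (u₂ - v₂)| := by
        simpa only [Real.dist_eq] using hγ.dist_le_mul (u₁ - v₁) (u₂ - v₂)
    _ = K * |(u₁ - u₂) - (v₁ - v₂)| := by rw [sub_sub_sub_comm]
    _ ≤ K * (|u₁ - u₂| + |v₁ - v₂|) := by gcongr; exact abs_sub _ _

lemma mul_sub_nonneg_of_monotone {α β : Type*} [AddCommGroup α] [LinearOrder α]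
    [IsOrderedAddMonoid α] [Ring β] [LinearOrder β] [IsOrderedRing β] {f g : α → β}
    (hf : Monotone f) (hg : Monotone g) {a b a' b' : α} (h : a - b = a' - b') :
    0 ≤ (f a - f b) * (g a' - g b') := by
  rcases le_total b a with hab | hab
  · have hab' : b' ≤ a' := sub_nonneg.1 (h ▸ sub_nonneg.2 hab)
    exact mul_nonneg (sub_nonneg.2 (hf hab)) (sub_nonneg.2 (hg hab'))
  · have hab' : a' ≤ b' := sub_nonpos.1 (h ▸ sub_nonpos.2 hab)
    exact mul_nonneg_of_nonpos_of_nonpos (sub_nonpos.2 (hf hab)) (sub_nonpos.2 (hg hab'))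

lemma integrable_spow_mul_div {X : Type*} [MeasurableSpace X] {μ : Measure X}
    {p K : ℝ} (hp : 1 < p) (hK : 0 ≤ K) {a b t w : X → ℝ}
    (hm : AEStronglyMeasurable (fun z => spow (p - 1) (a z) * t z / w z) μ)
    (ha : Integrable (fun z => |a z| ^ p / w z) μ) (hb : Integrable (fun z => |b z| ^ p / w z) μ)
    (hw : ∀ z, 0 ≤ w z) (ht : ∀ z, |t z| ≤ K * (|a z| + |b z|)) :
    Integrable (fun z => spow (p - 1) (a z) * t z / w z) μ := by
  refine (((ha.const_mul 2).add (hb.const_mul 2)).const_mul K).mono' hm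
    (Filter.Eventually.of_forall fun z => ?_)
  rw [Real.norm_eq_abs, abs_div, abs_of_nonneg (hw z)]
  calc |spow (p - 1) (a z) * t z| / w z ≤ K * (2 * |a z| ^ p + 2 * |b z| ^ p) / w z :=
        div_le_div_of_nonneg_right (abs_spow_mul_le hp hK (ht z)) (hw z)
    _ = K * (2 * (|a z| ^ p / w z) + 2 * (|b z| ^ p / w z)) := by ring

section Pairing

variable {d : ℕ} {s p : ℝ}

lemma integrable_gagliardo_integrand {u : EuclideanSpace ℝ (Fin d) → ℝ} (hu : Measurable u)
    (hfin : gagliardo d s p u < ⊤) :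
    Integrable (fun z : EuclideanSpace ℝ (Fin d) × EuclideanSpace ℝ (Fin d) =>
      |u z.1 - u z.2| ^ p / ‖z.1 - z.2‖ ^ ((d : ℝ) + s * p)) := by
  refine ⟨(by fun_prop : Measurable _).aestronglyMeasurable,
    (hasFiniteIntegral_iff_ofReal ?_).2 hfin⟩
  filter_upwards with z
  positivity

lemma integrable_pairing_integrand (hp : 1 < p) {u v φ : EuclideanSpace ℝ (Fin d) → ℝ}
    {K : ℝ} (hK : 0 ≤ K) (hu : Measurable u) (hv : Measurable v) (hφ : Measurable φ)
    (hgu : gagliardo d s p u < ⊤) (hgv : gagliardo d s p v < ⊤)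
    (hφuv : ∀ x y, |φ x - φ y| ≤ K * (|u x - u y| + |v x - v y|)) :
    Integrable (fun z : EuclideanSpace ℝ (Fin d) × EuclideanSpace ℝ (Fin d) =>
      spow (p - 1) (u z.1 - u z.2) * (φ z.1 - φ z.2) / ‖z.1 - z.2‖ ^ ((d : ℝ) + s * p)) := by
  have hspow : Measurable (spow (p - 1)) := (monotone_spow (by linarith)).measurable
  exact integrable_spow_mul_div hp hK (by fun_prop : Measurable _).aestronglyMeasurable
    (integrable_gagliardo_integrand hu hgu) (integrable_gagliardo_integrand hv hgv)
    (fun _ => by positivity) (fun z => hφuv z.1 z.2)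

end Pairing

theorem stmt1_general (d : ℕ) (p s : ℝ) (hp : 1 < p)
    (Ω : Set (EuclideanSpace ℝ (Fin d)))
    (U V : EuclideanSpace ℝ (Fin d) → ℝ)
    (hU : memW0 d s p Ω U) (hV : memW0 d s p Ω V)
    (γ : ℝ → ℝ) (hmono : Monotone γ) (K : NNReal) (hlip : LipschitzWith K γ) :
    fracPairing d s p U (fun x => γ (U x - V x)) -
      fracPairing d s p V (fun x => γ (U x - V x)) ≥ 0 := by
  obtain ⟨hUm, -, hUg, -⟩ := hU
  obtain ⟨hVm, -, hVg, -⟩ := hV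
  have hφm : Measurable fun x => γ (U x - V x) := hlip.continuous.measurable.comp (hUm.sub hVm)
  have hφ := hlip.abs_sub_comp_sub_le
  have hIU := integrable_pairing_integrand hp K.coe_nonneg hUm hVm hφm hUg hVg
    fun x y => hφ (U x) (U y) (V x) (V y)
  have hIV := integrable_pairing_integrand hp K.coe_nonneg hVm hUm hφm hVg hUg
    fun x y => (hφ (U x) (U y) (V x) (V y)).trans_eq (by rw [add_comm])
  rw [ge_iff_le, fracPairing, fracPairing, ← integral_sub hIU hIV]
  refine integral_nonneg fun z => ?_
  rw [← sub_div, ← sub_mul]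
  exact div_nonneg (mul_sub_nonneg_of_monotone (monotone_spow (by linarith)) hmono (by ring))
    (by positivity)

/-- For `U, V ∈ W^{s,p}_0(Ω)` and `γ` nondecreasing, Lipschitz with
`γ(0) = 0`, one has `E(U, γ∘(U−V)) − E(V, γ∘(U−V)) ≥ 0`. -/
theorem stmt1 (d : ℕ) (hd : 1 ≤ d) (p s : ℝ) (hp : 1 < p) (hs : s ∈ Set.Ioo (0 : ℝ) 1)
    (Ω : Set (EuclideanSpace ℝ (Fin d))) (hΩo : IsOpen Ω) (hΩb : Bornology.IsBounded Ω)
    (U V : EuclideanSpace ℝ (Fin d) → ℝ)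
    (hU : memW0 d s p Ω U) (hV : memW0 d s p Ω V)
    (γ : ℝ → ℝ) (hmono : Monotone γ) (K : NNReal) (hlip : LipschitzWith K γ)
    (hγ0 : γ 0 = 0) :
    fracPairing d s p U (fun x => γ (U x - V x)) -
      fracPairing d s p V (fun x => γ (U x - V x)) ≥ 0 :=
  stmt1_general d p s hp Ω U V hU hV γ hmono K hlip
end

section
/- (Finite-time extinction ODE lemma.) Let c > 0, C ≥ 0 and 0 < α < γ < 1. Let M : [0,∞) → [0,∞) be continuous and satisfy M(t₂) − M(t₁) ≤ ∫_{t₁}^{t₂} (C·M(τ)^γ − c·M(τ)^α) dτ for all 0 ≤ t₁ ≤ t₂. Assume that either C = 0, or M(0)^{γ−α} < c/C. Then M is nonincreasing and there exists t₀ ≥ 0 such that M(t) = 0 for all t ≥ t₀. -/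
/-! Since `C M(0)^(γ-α) < c`, some level `θ > M(0)` still has `C θ^(γ-α) < c`, and below `θ`
the rate satisfies `C m^γ - c m^α ≤ -K m^α` with `K = c - C θ^(γ-α) > 0`. At the first time `M`
reached `θ` it would, by continuity, be at most `M(0) < θ`; so `M` stays below `θ`, the rate along
`M` is nonpositive, and `M` is nonincreasing. While `M > x/2` the integral drops by at least
`K (x/2)^α` per unit time, so `M` halves from any level `x` within time `2^α x^(1-α) / K`. As
`1 - α > 0`, these times form a convergent geometric series and `M` vanishes after its sum. -/

open Set

section IntegralSubsolution

variable {M g : ℝ → ℝ}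

theorem le_of_integral_bound_of_nonpos
    (hM : ∀ t₁ t₂ : ℝ, 0 ≤ t₁ → t₁ ≤ t₂ → M t₂ - M t₁ ≤ ∫ τ in t₁..t₂, g τ)
    {t₁ t₂ : ℝ} (ht₁ : 0 ≤ t₁) (h : t₁ ≤ t₂) (hg : ∀ τ ∈ Icc t₁ t₂, g τ ≤ 0) :
    M t₂ ≤ M t₁ := by
  have hint : 0 ≤ ∫ τ in t₁..t₂, -g τ :=
    intervalIntegral.integral_nonneg h fun τ hτ => neg_nonneg.mpr (hg τ hτ)
  rw [intervalIntegral.integral_neg] at hint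
  linarith [hM t₁ t₂ ht₁ h]

theorem lt_of_integral_bound_of_nonpos_below (hMc : ContinuousOn M (Ici 0))
    (hM : ∀ t₁ t₂ : ℝ, 0 ≤ t₁ → t₁ ≤ t₂ → M t₂ - M t₁ ≤ ∫ τ in t₁..t₂, g τ)
    {θ : ℝ} (hg : ∀ τ, 0 ≤ τ → M τ ≤ θ → g τ ≤ 0) (h0 : M 0 < θ) {t : ℝ} (ht : 0 ≤ t) :
    M t < θ := by
  by_contra! hθt
  set S := Icc 0 t ∩ M ⁻¹' Ici θ
  have hSc : IsClosed S := (hMc.mono Icc_subset_Ici_self).preimage_isClosed_of_isClosed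
    isClosed_Icc isClosed_Ici
  have hSbdd : BddBelow S := ⟨0, fun _ hτ => hτ.1.1⟩
  have hsS : sInf S ∈ S := hSc.csInf_mem ⟨t, ⟨⟨ht, le_rfl⟩, hθt⟩⟩ hSbdd
  set s := sInf S
  have hs0 : 0 ≤ s := hsS.1.1
  have hbefore : ∀ u ∈ Ico 0 s, M u < θ := fun u hu => by
    by_contra! hθu
    exact (csInf_le hSbdd ⟨⟨hu.1, hu.2.le.trans hsS.1.2⟩, hθu⟩).not_gt hu.2
  have hMs : M s ≤ M 0 := by
    rcases hs0.eq_or_lt with hs | hs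
    · rw [← hs]
    refine ContinuousWithinAt.closure_le (s := Ico 0 s) (by simp [closure_Ico hs.ne, hs.le])
      ((hMc s hs0).mono fun _ hu => hu.1) continuousWithinAt_const fun u hu => ?_
    exact le_of_integral_bound_of_nonpos hM le_rfl hu.1 fun τ hτ =>
      hg τ hτ.1 (hbefore τ ⟨hτ.1, hτ.2.trans_lt hu.2⟩).le
  exact (hMs.trans_lt h0).not_ge hsS.2

theorem antitoneOn_of_integral_bound_of_nonpos_below (hMc : ContinuousOn M (Ici 0))
    (hM : ∀ t₁ t₂ : ℝ, 0 ≤ t₁ → t₁ ≤ t₂ → M t₂ - M t₁ ≤ ∫ τ in t₁..t₂, g τ)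
    {θ : ℝ} (hg : ∀ τ, 0 ≤ τ → M τ ≤ θ → g τ ≤ 0) (h0 : M 0 < θ) :
    AntitoneOn M (Ici 0) := fun _ ht₁ _ _ h =>
  le_of_integral_bound_of_nonpos hM ht₁ h fun τ hτ =>
    have hτ0 : 0 ≤ τ := ht₁.trans hτ.1
    hg τ hτ0 (lt_of_integral_bound_of_nonpos_below hMc hM hg h0 hτ0).le

theorem le_half_of_integral_bound {K α : ℝ} (hgc : ContinuousOn g (Ici 0))
    (hM : ∀ t₁ t₂ : ℝ, 0 ≤ t₁ → t₁ ≤ t₂ → M t₂ - M t₁ ≤ ∫ τ in t₁..t₂, g τ)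
    (hanti : AntitoneOn M (Ici 0)) (hK : 0 < K) (hα : 0 ≤ α)
    (hg : ∀ τ, 0 ≤ τ → g τ ≤ -K * M τ ^ α) {t x : ℝ} (ht : 0 ≤ t) (hx : 0 < x)
    (hMt : M t ≤ x) :
    M (t + 2 ^ α / K * x ^ (1 - α)) ≤ x / 2 := by
  have hd : t ≤ t + 2 ^ α / K * x ^ (1 - α) := le_add_of_nonneg_right (by positivity)
  by_contra! hlate
  have hrate : ∀ τ ∈ Icc t (t + 2 ^ α / K * x ^ (1 - α)), g τ ≤ -K * (x / 2) ^ α :=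
    fun τ hτ => by
      have hτ0 : 0 ≤ τ := ht.trans hτ.1
      have hMτ : x / 2 < M τ := hlate.trans_le (hanti hτ0 (hτ0.trans hτ.2) hτ.2)
      have := Real.rpow_le_rpow (by positivity) hMτ.le hα
      nlinarith [hg τ hτ0]
  have hdrop : (t + 2 ^ α / K * x ^ (1 - α) - t) * (-K * (x / 2) ^ α) = -x := by
    have hxα : x ^ (1 - α) * x ^ α = x := by rw [← Real.rpow_add hx]; norm_num
    rw [Real.div_rpow hx.le zero_le_two]
    field_simp
    linear_combination -(2:ℝ) ^ α * hxα
  have hint := intervalIntegral.integral_mono_on (μ := MeasureTheory.volume) hd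
    ((hgc.mono fun τ hτ => ht.trans (uIcc_of_le hd ▸ hτ).1).intervalIntegrable)
    intervalIntegrable_const hrate
  rw [intervalIntegral.integral_const, smul_eq_mul, hdrop] at hint
  linarith [hM t _ ht hd]

theorem exists_eq_zero_of_halving {F β : ℝ} (hanti : AntitoneOn M (Ici 0))
    (hM0 : ∀ t, 0 ≤ t → 0 ≤ M t) (hF : 0 ≤ F) (hβ : 0 < β)
    (hhalf : ∀ t, 0 ≤ t → ∀ x, 0 < x → M t ≤ x → M (t + F * x ^ β) ≤ x / 2) :
    ∃ T, 0 ≤ T ∧ ∀ t, T ≤ t → M t = 0 := by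
  set x₀ := M 0 + 1
  have hx₀ : 0 < x₀ := by linarith [hM0 0 le_rfl]
  set ρ : ℝ := (1 / 2) ^ β
  have hρ : ρ < 1 := Real.rpow_lt_one (by norm_num) (by norm_num) hβ
  have hstep : ∀ n : ℕ, F * (x₀ * (1 / 2) ^ n) ^ β = F * x₀ ^ β * ρ ^ n := fun n => by
    rw [Real.mul_rpow hx₀.le (by positivity), ← Real.rpow_pow_comm (by norm_num)]
    ring
  set time : ℕ → ℝ := fun n => ∑ k ∈ Finset.range n, F * x₀ ^ β * ρ ^ k
  have htime0 : ∀ n, 0 ≤ time n := fun n => by positivity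
  have htime : ∀ n, M (time n) ≤ x₀ * (1 / 2) ^ n := by
    intro n
    induction n with
    | zero => simp [time, x₀]
    | succ n ih =>
      have hnext : time (n + 1) = time n + F * (x₀ * (1 / 2) ^ n) ^ β := by
        rw [hstep]
        exact Finset.sum_range_succ _ _
      calc M (time (n + 1)) ≤ x₀ * (1 / 2) ^ n / 2 :=
            hnext ▸ hhalf (time n) (htime0 n) _ (by positivity) ih
        _ = x₀ * (1 / 2) ^ (n + 1) := by ring
  have hsum : Summable fun k => F * x₀ ^ β * ρ ^ k :=
    (summable_geometric_of_lt_one (by positivity) hρ).mul_left _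
  set T := ∑' k, F * x₀ ^ β * ρ ^ k
  have hT : 0 ≤ T := tsum_nonneg fun _ => by positivity
  have hMT : M T ≤ 0 := by
    have hlim := (tendsto_pow_atTop_nhds_zero_of_lt_one (r := (1 / 2 : ℝ)) (by norm_num)
      (by norm_num)).const_mul x₀
    rw [mul_zero] at hlim
    refine ge_of_tendsto' hlim fun n => (hanti (htime0 n) hT ?_).trans (htime n)
    exact hsum.sum_le_tsum _ fun _ _ => by positivity
  exact ⟨T, hT, fun t ht =>
    le_antisymm ((hanti hT (hT.trans ht) ht).trans hMT) (hM0 t (hT.trans ht))⟩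

end IntegralSubsolution

theorem mul_rpow_sub_mul_rpow_le {C c m θ α γ : ℝ} (hC : 0 ≤ C) (hm : 0 ≤ m) (hmθ : m ≤ θ)
    (hαγ : α ≤ γ) (hγ : γ ≠ 0) :
    C * m ^ γ - c * m ^ α ≤ -(c - C * θ ^ (γ - α)) * m ^ α := by
  have hsplit : m ^ γ = m ^ α * m ^ (γ - α) := by
    rw [← Real.rpow_add' hm (by simpa using hγ)]
    ring_nf
  have hmono := mul_le_mul_of_nonneg_left (Real.rpow_le_rpow hm hmθ (sub_nonneg.2 hαγ)) hC
  rw [hsplit]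
  nlinarith [Real.rpow_nonneg hm α]

theorem exists_gt_mul_rpow_lt {C c b p : ℝ} (hp : 0 < p) (h : C * b ^ p < c) :
    ∃ θ, b < θ ∧ C * θ ^ p < c :=
  (((continuous_const.mul (Real.continuous_rpow_const hp.le)).tendsto b).eventually_lt_const
    h).exists_gt

/-- finite-time extinction ODE lemma. Let `c > 0`, `C ≥ 0`,
`0 < α < γ < 1`, and let `M : [0,∞) → [0,∞)` be continuous with
`M(t₂) − M(t₁) ≤ ∫_{t₁}^{t₂} (C M^γ − c M^α)` for all `0 ≤ t₁ ≤ t₂`. If `C = 0` or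
`M(0)^{γ−α} < c/C`, then `M` is nonincreasing and vanishes identically from some time
`t₀` on. -/
theorem stmt9 (c C α γ : ℝ) (hc : 0 < c) (hC : 0 ≤ C)
    (hα : 0 < α) (hαγ : α < γ) (hγ : γ < 1)
    (M : ℝ → ℝ) (hMcont : ContinuousOn M (Set.Ici 0))
    (hMnonneg : ∀ t, 0 ≤ t → 0 ≤ M t)
    (hMineq : ∀ t₁ t₂ : ℝ, 0 ≤ t₁ → t₁ ≤ t₂ →
      M t₂ - M t₁ ≤ ∫ τ in t₁..t₂, (C * M τ ^ γ - c * M τ ^ α))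
    (hsmall : C = 0 ∨ M 0 ^ (γ - α) < c / C) :
    (∀ t₁ t₂ : ℝ, 0 ≤ t₁ → t₁ ≤ t₂ → M t₂ ≤ M t₁) ∧
      ∃ t₀ : ℝ, 0 ≤ t₀ ∧ ∀ t, t₀ ≤ t → M t = 0 := by
  have h0 : C * M 0 ^ (γ - α) < c := by
    rcases hsmall with hC0 | hsmall
    · simpa [hC0] using hc
    rcases hC.eq_or_lt with hC0 | hCpos
    · simpa [← hC0] using hc
    · exact (lt_div_iff₀' hCpos).mp hsmall
  obtain ⟨θ, hMθ, hθ⟩ := exists_gt_mul_rpow_lt (sub_pos.2 hαγ) h0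
  have hK : 0 < c - C * θ ^ (γ - α) := sub_pos.2 hθ
  have hrate : ∀ τ, 0 ≤ τ → M τ ≤ θ →
      C * M τ ^ γ - c * M τ ^ α ≤ -(c - C * θ ^ (γ - α)) * M τ ^ α := fun τ hτ hMτ =>
    mul_rpow_sub_mul_rpow_le hC (hMnonneg τ hτ) hMτ hαγ.le (hα.trans hαγ).ne'
  have hnonpos : ∀ τ, 0 ≤ τ → M τ ≤ θ → C * M τ ^ γ - c * M τ ^ α ≤ 0 := fun τ hτ hMτ =>
    (hrate τ hτ hMτ).trans (by nlinarith [Real.rpow_nonneg (hMnonneg τ hτ) α])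
  have hanti := antitoneOn_of_integral_bound_of_nonpos_below hMcont hMineq hnonpos hMθ
  have hgc : ContinuousOn (fun τ => C * M τ ^ γ - c * M τ ^ α) (Ici 0) :=
    (continuous_const.mul (Real.continuous_rpow_const (hα.trans hαγ).le)).comp_continuousOn hMcont
      |>.sub <| (continuous_const.mul (Real.continuous_rpow_const hα.le)).comp_continuousOn hMcont
  refine ⟨fun t₁ t₂ ht₁ h => hanti ht₁ (ht₁.trans h) h,
    exists_eq_zero_of_halving hanti hMnonneg ?_ (sub_pos.2 (hαγ.trans hγ))
      fun t ht x hx hMt => le_half_of_integral_bound hgc hMineq hanti hK hα.le ?_ ht hx hMt⟩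
  · exact div_nonneg (by positivity) hK.le
  · exact fun τ hτ =>
      hrate τ hτ (lt_of_integral_bound_of_nonpos_below hMcont hMineq hnonpos hMθ hτ).le
end
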